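/- The orthogonal projection P_{A'} onto the commutant A' of a finite-dimensional unital *-subalgebra A ⊆ B(H) equals the Haar average over the unitary group U(A) of A: P_{A'}(B) = ∫ U† B U dμ(U), where μ is the normalized Haar measure on the compact group of unitaries in A. -/

import Mathlib

open Matrix Kronecker MeasureTheory
open scoped ComplexOrder

noncomputable section

/-- Square complex matrices of size `n`. -/
abbrev Mat (n : ℕ) := Matrix (Fin n) (Fin n) ℂ

/-- Operator norm (spectral norm) of a square matrix. -/
noncomputable def opNorm {m : Type*} [Fintype m] [DecidableEq m]
    (A : Matrix m m ℂ) : ℝ :=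
  ‖Matrix.toEuclideanCLM (𝕜 := ℂ) A‖

/-- Trace norm of a square matrix. -/
noncomputable def traceNorm {m : Type*} [Fintype m] [DecidableEq m]
    (A : Matrix m m ℂ) : ℝ :=
  ((((Matrix.posSemidef_conjTranspose_mul_self A).1.eigenvectorUnitary : Matrix m m ℂ) *
    diagonal (((↑) : ℝ → ℂ) ∘ (√·) ∘ (Matrix.posSemidef_conjTranspose_mul_self A).1.eigenvalues) *
    (star ((Matrix.posSemidef_conjTranspose_mul_self A).1.eigenvectorUnitary : Matrix m m ℂ)))).trace.re

/-- Trivial extension `Φ ⊗ id` of a map on matrices, defined entrywise. -/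
def extendId {a b : ℕ} (Φ : Mat a → Mat b) (m : ℕ)
    (M : Matrix (Fin a × Fin m) (Fin a × Fin m) ℂ) :
    Matrix (Fin b × Fin m) (Fin b × Fin m) ℂ :=
  Matrix.of fun r c => Φ (Matrix.of fun p q => M (p, r.2) (q, c.2)) r.1 c.1

/-- Diamond norm of a (difference of) map(s) `Mat a → Mat b`, with ancilla of
dimension equal to the input dimension. -/
noncomputable def dnorm {a b : ℕ} (Φ : Mat a → Mat b) : ℝ :=
  ⨆ ρ : {ρ : Matrix (Fin a × Fin a) (Fin a × Fin a) ℂ // ρ.PosSemidef ∧ ρ.trace = 1},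
    traceNorm (extendId Φ a ρ.1)

/-- A map is a quantum channel (CPTP) iff it admits a Kraus representation. -/
def IsCPTP {a b : ℕ} (Φ : Mat a → Mat b) : Prop :=
  ∃ (κ : ℕ) (K : Fin κ → Matrix (Fin b) (Fin a) ℂ),
    (∀ ρ, Φ ρ = ∑ i, K i * ρ * (K i)ᴴ) ∧ (∑ i, (K i)ᴴ * K i = 1)

/-- `Nh` is a complementary channel of `N` (with environment of dimension `e`). -/
def IsComplementary {a b e : ℕ} (N : Mat a → Mat b) (Nh : Mat a → Mat e) : Prop :=
  ∃ K : Fin e → Matrix (Fin b) (Fin a) ℂ,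
    (∀ ρ, N ρ = ∑ i, K i * ρ * (K i)ᴴ) ∧ (∑ i, (K i)ᴴ * K i = 1) ∧
    (∀ ρ, Nh ρ = Matrix.of fun i j => (K i * ρ * (K j)ᴴ).trace)

/-- The commutant of a set of matrices. -/
def commutant {n : ℕ} (A : Set (Mat n)) : Set (Mat n) :=
  {X | ∀ a ∈ A, a * X = X * a}

/-- `P` is the Hilbert–Schmidt-orthogonal projection onto the set `S`. -/
def IsHSProjectionOnto {n : ℕ} (P : Mat n → Mat n) (S : Set (Mat n)) : Prop :=
  (∀ X, P X ∈ S) ∧ (∀ X ∈ S, P X = X) ∧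
  (∀ X Y, ((P X)ᴴ * Y).trace = (Xᴴ * P Y).trace)

end


/-! Write `Q M` for the Haar average of `U† M U`. It fixes the commutant `A'` pointwise, since
each `U ∈ G` lies in `A`, and by left invariance it kills every difference `M - V M V†` with
`V ∈ G`. A linear functional `tr (Y * ·)` vanishing on all these differences has `Y` commuting
with `G`, hence with `A`, because a finite-dimensional C⋆-algebra is spanned by its unitaries;
so these differences span everything trace-orthogonal to `A'`. Thus `Q` agrees with `P` both on
`A'` and on its orthogonal complement. -/

theorem StarSubalgebra.mem_span_unitary {E : Type*} [CStarAlgebra E] [FiniteDimensional ℂ E]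
    (A : StarSubalgebra ℂ E) {a : E} (ha : a ∈ A) :
    a ∈ Submodule.span ℂ {u | u ∈ A ∧ u ∈ unitary E} := by
  have : IsClosed (A : Set E) := A.toSubalgebra.toSubmodule.closed_of_finiteDimensional
  have hmem : (⟨a, ha⟩ : A) ∈ Submodule.span ℂ (unitary A : Set A) := by
    rw [CStarAlgebra.span_unitary A]; exact Submodule.mem_top
  have hmap := Submodule.mem_map_of_mem (f := A.subtype.toLinearMap) hmem
  rw [Submodule.map_span] at hmap
  refine Submodule.span_mono ?_ hmap
  rintro _ ⟨u, hu, rfl⟩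
  exact ⟨u.2, Unitary.map_mem A.subtype hu⟩

open scoped Matrix.Norms.L2Operator in
theorem mem_commutant_of_forall_unitary {n : ℕ} {A : StarSubalgebra ℂ (Mat n)} {X : Mat n}
    (hX : ∀ u ∈ A, u ∈ unitary (Mat n) → u * X = X * u) :
    X ∈ commutant (A : Set (Mat n)) := by
  intro a ha
  have hspan : Submodule.span ℂ {u | u ∈ A ∧ u ∈ unitary (Mat n)} ≤
      (Subalgebra.centralizer ℂ {X}).toSubmodule :=
    Submodule.span_le.mpr fun u hu => by rintro _ rfl; exact (hX u hu.1 hu.2).symm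
  exact (hspan (A.mem_span_unitary ha) X rfl).symm

theorem Matrix.exists_trace_mul_eq {m K : Type*} [Fintype m] [DecidableEq m] [Field K]
    (f : Module.Dual K (Matrix m m K)) : ∃ Y : Matrix m m K, ∀ M, f M = (Y * M).trace := by
  let τ := (LinearMap.mul K (Matrix m m K)).compr₂ (Matrix.traceLinearMap m K K)
  have hinj : Function.Injective τ := by
    rw [← LinearMap.ker_eq_bot, LinearMap.ker_eq_bot']
    intro Y hY
    rw [Matrix.ext_iff_trace_mul_right]
    intro M
    simpa [τ] using LinearMap.congr_fun hY M
  obtain ⟨Y, hY⟩ := (LinearMap.injective_iff_surjective_of_finrank_eq_finrank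
    Subspace.dual_finrank_eq.symm).mp hinj f
  exact ⟨Y, fun M => by simp [← hY, τ]⟩

theorem mem_span_sub_conj_of_trace_mul_eq_zero {n : ℕ}
    {S : Set (Matrix.unitaryGroup (Fin n) ℂ)} {N : Mat n}
    (hN : ∀ X : Mat n, (∀ V ∈ S, (V : Mat n) * X = X * V) → (X * N).trace = 0) :
    N ∈ Submodule.span ℂ {D | ∃ V ∈ S, ∃ M : Mat n, D = M - V * M * (V : Mat n)ᴴ} := by
  by_contra hNW
  obtain ⟨f, hfN, hfW⟩ := Submodule.exists_dual_map_eq_bot_of_notMem hNW inferInstance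
  obtain ⟨Y, hY⟩ := Matrix.exists_trace_mul_eq f
  refine hfN ((hY N).trans (hN Y fun V hV => ?_))
  have hVV : (V : Mat n) * (V : Mat n)ᴴ = 1 := Matrix.mem_unitaryGroup_iff.mp V.2
  have hconj : (V : Mat n)ᴴ * Y * V = Y := by
    rw [Matrix.ext_iff_trace_mul_right]
    intro M
    have hzero : f (M - V * M * (V : Mat n)ᴴ) = 0 :=
      (Submodule.eq_bot_iff _).mp hfW _
        (Submodule.mem_map_of_mem (Submodule.subset_span ⟨V, hV, M, rfl⟩))
    rw [hY, Matrix.mul_sub, Matrix.trace_sub, sub_eq_zero] at hzero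
    rw [hzero, ← Matrix.mul_assoc Y, Matrix.trace_mul_cycle Y, ← Matrix.mul_assoc _ (V : Mat n)]
  calc (V : Mat n) * Y = V * ((V : Mat n)ᴴ * Y * V) := by rw [hconj]
    _ = Y * V := by rw [← Matrix.mul_assoc, ← Matrix.mul_assoc, hVV, Matrix.one_mul]

theorem IsHSProjectionOnto.trace_conjTranspose_mul_sub_eq_zero {n : ℕ} {P : Mat n → Mat n}
    {S : Set (Mat n)} (hP : IsHSProjectionOnto P S) {X : Mat n} (hX : X ∈ S) (B : Mat n) :
    (Xᴴ * (B - P B)).trace = 0 := by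
  rw [Matrix.mul_sub, Matrix.trace_sub, sub_eq_zero, ← hP.2.2, hP.2.1 X hX]

section ConjAverage

variable {n : ℕ} {G : Subgroup (Matrix.unitaryGroup (Fin n) ℂ)} [MeasurableSpace G]
  (μ : Measure G)

noncomputable def conjAverage (M : Mat n) : Mat n :=
  Matrix.of fun i j => ∫ U, ((U.1 : Mat n)ᴴ * M * (U.1 : Mat n)) i j ∂μ

def ConjIntegrable (M : Mat n) : Prop :=
  ∀ i j, Integrable (fun U : G => ((U.1 : Mat n)ᴴ * M * (U.1 : Mat n)) i j) μ

variable {μ}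

theorem conjAverage_add {M N : Mat n} (hM : ConjIntegrable μ M) (hN : ConjIntegrable μ N) :
    conjAverage μ (M + N) = conjAverage μ M + conjAverage μ N := by
  ext i j
  simp only [conjAverage, Matrix.of_apply, Matrix.mul_add, Matrix.add_mul, Matrix.add_apply]
  exact integral_add (hM i j) (hN i j)

theorem conjAverage_sub {M N : Mat n} (hM : ConjIntegrable μ M) (hN : ConjIntegrable μ N) :
    conjAverage μ (M - N) = conjAverage μ M - conjAverage μ N := by
  ext i j
  simp only [conjAverage, Matrix.of_apply, Matrix.mul_sub, Matrix.sub_mul, Matrix.sub_apply]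
  exact integral_sub (hM i j) (hN i j)

theorem conjAverage_smul (c : ℂ) (M : Mat n) :
    conjAverage μ (c • M) = c • conjAverage μ M := by
  ext i j
  simp only [conjAverage, Matrix.of_apply, Matrix.mul_smul, Matrix.smul_mul, Matrix.smul_apply]
  exact integral_smul c _

theorem conjAverage_conj (hInv : ∀ (f : G → ℂ) (V : G), ∫ U, f (V * U) ∂μ = ∫ U, f U ∂μ)
    (V : G) (M : Mat n) :
    conjAverage μ ((V.1 : Mat n) * M * (V.1 : Mat n)ᴴ) = conjAverage μ M := by
  ext i j
  simp only [conjAverage, Matrix.of_apply]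
  symm
  rw [← hInv _ V⁻¹]
  congr 1
  funext U
  have hinv : ((V⁻¹ * U).1 : Mat n) = (V.1 : Mat n)ᴴ * U.1 := by
    simp [Matrix.star_eq_conjTranspose]
  rw [hinv, Matrix.conjTranspose_mul, Matrix.conjTranspose_conjTranspose]
  simp only [Matrix.mul_assoc]

theorem conjAverage_eq_self [IsProbabilityMeasure μ] {X : Mat n}
    (hX : ∀ U : G, (U.1 : Mat n) * X = X * U.1) : conjAverage μ X = X := by
  ext i j
  have hfix : ∀ U : G, (U.1 : Mat n)ᴴ * X * U.1 = X := fun U => by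
    have hUU : (U.1 : Mat n)ᴴ * U.1 = 1 := Matrix.UnitaryGroup.star_mul_self U.1
    rw [Matrix.mul_assoc, ← hX, ← Matrix.mul_assoc, hUU, Matrix.one_mul]
  simp [conjAverage, hfix]

theorem conjAverage_eq_zero_of_mem_span
    (hInv : ∀ (f : G → ℂ) (V : G), ∫ U, f (V * U) ∂μ = ∫ U, f U ∂μ)
    (hInt : ∀ B, ConjIntegrable μ B) {D : Mat n}
    (hD : D ∈ Submodule.span ℂ {D | ∃ V ∈ G, ∃ M : Mat n, D = M - V * M * (V : Mat n)ᴴ}) :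
    conjAverage μ D = 0 := by
  induction hD using Submodule.span_induction with
  | mem D hD =>
    obtain ⟨V, hV, M, rfl⟩ := hD
    rw [conjAverage_sub (hInt _) (hInt _), conjAverage_conj hInv ⟨V, hV⟩, sub_self]
  | zero => ext; simp [conjAverage]
  | add D E _ _ hD hE => rw [conjAverage_add (hInt D) (hInt E), hD, hE, add_zero]
  | smul c D _ hD => rw [conjAverage_smul, hD, smul_zero]

end ConjAverage

/-- the HS projection onto the commutant is the Haar average
over the unitary group of the algebra. -/
theorem stmt_2 {n : ℕ} (A : StarSubalgebra ℂ (Mat n))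
    (G : Subgroup (Matrix.unitaryGroup (Fin n) ℂ))
    (hG : ∀ U : Matrix.unitaryGroup (Fin n) ℂ, U ∈ G ↔ (U : Mat n) ∈ A)
    [MeasurableSpace G] (μ : Measure G) [IsProbabilityMeasure μ]
    (hInv : ∀ (f : G → ℂ) (V : G), ∫ U, f (V * U) ∂μ = ∫ U, f U ∂μ)
    (hInt : ∀ (B : Mat n) (i j : Fin n),
      Integrable (fun U : G => ((U.1 : Mat n)ᴴ * B * (U.1 : Mat n)) i j) μ)
    (P : Mat n → Mat n)
    (hP : IsHSProjectionOnto P (commutant (A : Set (Mat n))))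
    (B : Mat n) :
    P B = Matrix.of fun i j =>
      ∫ U, ((U.1 : Mat n)ᴴ * B * (U.1 : Mat n)) i j ∂μ := by
  change P B = conjAverage μ B
  have hfix : conjAverage μ (P B) = P B :=
    conjAverage_eq_self fun U => hP.1 B _ ((hG U.1).1 U.2)
  have hker : conjAverage μ (B - P B) = 0 := by
    refine conjAverage_eq_zero_of_mem_span hInv hInt (mem_span_sub_conj_of_trace_mul_eq_zero ?_)
    intro X hX
    have hXA : X ∈ commutant (A : Set (Mat n)) :=
      mem_commutant_of_forall_unitary fun u hu hu' => hX ⟨u, hu'⟩ ((hG _).2 hu)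
    have hXsA : Xᴴ ∈ commutant (A : Set (Mat n)) :=
      Set.star_mem_centralizer' (fun _ ha => star_mem ha) hXA
    simpa using hP.trace_conjTranspose_mul_sub_eq_zero hXsA B
  rw [conjAverage_sub (hInt B) (hInt (P B)), hfix, sub_eq_zero] at hker
  exact hker.symm
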